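/- arXiv:1912.04477 — 6 statements merged into one kernel-verified Lean document; each statement's English description precedes it below -/
import Mathlib

section
/- Let λ be a partition with at most k parts and let μ be defined by μ_1 = λ_1 and μ_i = min(μ_{i-1}, λ_i + (i-1)) for 1 < i ≤ k. Then there exists a filling T of the skew shape μ/λ with entries in [k] such that entries strictly increase left-to-right in each row, strictly increase top-to-bottom in each column, and entries in row i are at most i-1. Explicitly, T(i,j) = i + j - μ_i - 1 for λ_i < j ≤ μ_i is such a filling. -/
/-- `IsTab k lam mu T` says `T` is a filling of the skew shape `mu/lam`
(cells `(i,j)` with `1 ≤ i ≤ k`, `lam i < j ≤ mu i`) with entries in `[k]`,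
strictly increasing left-to-right in rows, strictly increasing top-to-bottom in
columns, and with every entry in row `i` at most `i - 1`. -/
def IsTab (k : ℕ) (lam mu : ℕ → ℕ) (T : ℕ → ℕ → ℕ) : Prop :=
  (∀ i j, 1 ≤ i → i ≤ k → lam i < j → j ≤ mu i →
      1 ≤ T i j ∧ T i j ≤ k ∧ T i j ≤ i - 1) ∧
  (∀ i j j', 1 ≤ i → i ≤ k → lam i < j → j < j' → j' ≤ mu i → T i j < T i j') ∧
  (∀ i i' j, 1 ≤ i → i < i' → i' ≤ k → lam i < j → j ≤ mu i →
      lam i' < j → j ≤ mu i' → T i j < T i' j)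

/-- For the partition `μ` maximal for `λ`, the explicit filling
`T i j = i + j - μ i - 1` belongs to `Tab(μ/λ)`; in particular `Tab(μ/λ) ≠ ∅`. -/
theorem explicit_filling_isTab (k : ℕ) (lam mu : ℕ → ℕ)
    (hlam : ∀ i, 1 ≤ i → i < k → lam (i + 1) ≤ lam i)
    (hmu1 : mu 1 = lam 1)
    (hmu : ∀ i, 1 < i → i ≤ k → mu i = min (mu (i - 1)) (lam i + (i - 1))) :
    IsTab k lam mu (fun i j => i + j - mu i - 1) ∧ ∃ T, IsTab k lam mu T := by
  -- mu is nonincreasing on [1, k]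
  have hmono : ∀ i', 1 ≤ i' → i' ≤ k → ∀ i, 1 ≤ i → i ≤ i' → mu i' ≤ mu i := by
    intro i'
    induction i' with
    | zero => omega
    | succ n ih =>
      intro h1 hk i hi hii'
      rcases Nat.eq_or_lt_of_le hii' with h | h
      · rw [h]
      · have hn1 : 1 ≤ n := by omega
        have hrec := hmu (n + 1) (by omega) hk
        have h2 : mu (n + 1) ≤ mu n := by
          simp only [Nat.add_sub_cancel] at hrec
          rw [hrec]; exact min_le_left _ _
        exact le_trans h2 (ih hn1 (by omega) i hi (by omega))
  -- key bound: in any cell of row i ≥ 2, mu i + 2 ≤ i + j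
  have hkey : ∀ i j, 2 ≤ i → i ≤ k → lam i < j → j ≤ mu i → mu i + 2 ≤ i + j := by
    intro i j h2 hk hj _
    have h := hmu i (by omega) hk
    have : mu i ≤ lam i + (i - 1) := by
      rw [h]; exact min_le_right _ _
    omega
  have hIsTab : IsTab k lam mu (fun i j => i + j - mu i - 1) := by
    refine ⟨?_, ?_, ?_⟩
    · intro i j hi hik hj hjm
      rcases Nat.eq_or_lt_of_le hi with h | h
      · exfalso; rw [← h] at hj hjm; omega
      · have := hkey i j (by omega) hik hj hjm
        simp only
        omega
    · intro i j j' hi hik hj hjj' hjm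
      rcases Nat.eq_or_lt_of_le hi with h | h
      · exfalso; rw [← h] at hj hjm; omega
      · have := hkey i j (by omega) hik hj (by omega)
        simp only
        omega
    · intro i i' j hi hii' hik hj hjm hj' hjm'
      rcases Nat.eq_or_lt_of_le hi with h | h
      · exfalso; rw [← h] at hj hjm; omega
      · have h1 := hkey i j (by omega) (by omega) hj hjm
        have h2 := hkey i' j (by omega) hik hj' hjm'
        have h3 := hmono i' (by omega) hik i hi (by omega)
        simp only
        omega
  exact ⟨hIsTab, ⟨_, hIsTab⟩⟩
end

section
/- Let λ be a partition with at most k parts and let μ be defined by μ_1 = λ_1 and μ_i = min(μ_{i-1}, λ_i + (i-1)) for 1 < i ≤ k. Then μ is the unique partition maximal for λ: Tab(μ/λ) is nonempty, and for any partition ν with |ν| > |μ|, Tab(ν/λ) is empty. -/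
/-- The recursively defined `μ` is the unique partition maximal for `λ`:
`Tab(μ/λ)` is nonempty, and `Tab(ν/λ)` is empty for every partition `ν`
with `|ν| > |μ|`. -/
theorem maximal_partition_unique (k : ℕ) (lam mu : ℕ → ℕ)
    (hlam : ∀ i, 1 ≤ i → i < k → lam (i + 1) ≤ lam i)
    (hmu1 : mu 1 = lam 1)
    (hmu : ∀ i, 1 < i → i ≤ k → mu i = min (mu (i - 1)) (lam i + (i - 1))) :
    (∃ T, IsTab k lam mu T) ∧
    ∀ nu : ℕ → ℕ, (∀ i, 1 ≤ i → i < k → nu (i + 1) ≤ nu i) →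
      (∑ i ∈ Finset.Icc 1 k, mu i) < (∑ i ∈ Finset.Icc 1 k, nu i) →
      ¬ ∃ T, IsTab k lam nu T := by
  -- mu is weakly decreasing
  have hmono : ∀ i, 1 ≤ i → ∀ i', i ≤ i' → i' ≤ k → mu i' ≤ mu i := by
    intro i hi i' hii' hi'k
    induction i' with
    | zero => omega
    | succ n ih =>
      rcases Nat.eq_or_lt_of_le hii' with h | h
      · exact le_of_eq (by rw [h])
      · have h4 := hmu (n + 1) (by omega) hi'k
        rw [show n + 1 - 1 = n from rfl] at h4
        have ihn := ih (by omega) (by omega)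
        exact le_trans (h4 ▸ min_le_left _ _) ihn
  -- mu i ≤ lam i + (i-1)
  have hbound : ∀ i, 1 ≤ i → i ≤ k → mu i ≤ lam i + (i - 1) := by
    intro i hi hik
    rcases Nat.eq_or_lt_of_le hi with h | h
    · subst h; omega
    · rw [hmu i h hik]; exact min_le_right _ _
  constructor
  · refine ⟨fun i j => j + (i - 1) - mu i, ?_, ?_, ?_⟩
    · intro i j hi hik hj hjm
      have hb := hbound i hi hik
      simp only []
      omega
    · intro i j j' hi hik hj hjj' hj'm
      have hb := hbound i hi hik
      simp only []
      omega
    · intro i i' j hi hii' hi'k hj hjm hj' hjm'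
      have hb := hbound i (by omega) (by omega)
      have hb' := hbound i' (by omega) hi'k
      have hm := hmono i (by omega) i' (by omega) hi'k
      simp only []
      omega
  · rintro nu hnu hsum ⟨T, hT1, hT2, hT3⟩
    have hrow : ∀ i, 1 ≤ i → i ≤ k → ∀ m, 1 ≤ m → lam i + m ≤ nu i →
        m ≤ T i (lam i + m) := by
      intro i hi hik m
      induction m with
      | zero => omega
      | succ n ih =>
        intro _ hle
        rcases Nat.eq_zero_or_pos n with h | h
        · subst h
          exact (hT1 i (lam i + 1) hi hik (by omega) (by omega)).1
        · have h1 := ih (by omega) (by omega)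
          have h2 := hT2 i (lam i + n) (lam i + (n + 1)) hi hik (by omega)
            (by omega) hle
          omega
    have hnub : ∀ i, 1 ≤ i → i ≤ k → nu i ≤ lam i + (i - 1) := by
      intro i hi hik
      by_contra h
      push_neg at h
      have h1 := hrow i hi hik (nu i - lam i) (by omega) (by omega)
      have h2 := (hT1 i (lam i + (nu i - lam i)) hi hik (by omega) (by omega)).2.2
      omega
    have key : ∀ i, 1 ≤ i → i ≤ k → nu i ≤ mu i := by
      intro i
      induction i with
      | zero => omega
      | succ n ih =>
        intro _ hik
        rcases Nat.eq_zero_or_pos n with h | h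
        · subst h
          have h1 := hnub 1 le_rfl hik
          show nu 1 ≤ mu 1
          omega
        · have h1 := ih (by omega) (by omega)
          have h2 := hnu n (by omega) (by omega)
          have h3 := hnub (n + 1) (by omega) hik
          have h4 := hmu (n + 1) (by omega) hik
          rw [show n + 1 - 1 = n from rfl] at h4
          rw [h4]
          exact le_min (le_trans h2 h1) h3
    have hle : ∑ i ∈ Finset.Icc 1 k, nu i ≤ ∑ i ∈ Finset.Icc 1 k, mu i :=
      Finset.sum_le_sum fun i hi =>
        key i (Finset.mem_Icc.mp hi).1 (Finset.mem_Icc.mp hi).2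
    omega
end

section
/- Let λ be a partition with distinct part values λ_{m_1} > λ_{m_2} > ... > λ_{m_r} (m_h = smallest index achieving the h-th largest value), and set λ^{(h)} = (λ_1 - λ_{m_{h+1}}, ..., λ_{m_{h+1}-1} - λ_{m_{h+1}}) for h < r with λ^{(r)} = λ and λ^{(0)} = ∅. Let μ be the maximal partition for λ (μ_1 = λ_1, μ_i = min(μ_{i-1}, λ_i + (i-1))). Then for any index i belonging to the (h+1)-st block of equal parts of λ (0 ≤ h < r), μ_i = λ_i + sylv(λ^{(h)}). -/
/-- The staircase partition `δ^m = (m, m-1, ..., 1)`, as a function on 1-based indices. -/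
def staircase (m : ℕ) : ℕ → ℕ := fun i => if 1 ≤ i ∧ i ≤ m then m + 1 - i else 0

/-- `sylv μ` is the largest `m` such that the staircase `δ^m` is contained in `μ`
(componentwise), with `sylv μ = 0` when no staircase fits. -/
noncomputable def sylv (mu : ℕ → ℕ) : ℕ := sSup {m : ℕ | ∀ i, staircase m i ≤ mu i}

lemma lam_antitone (k : ℕ) (lam : ℕ → ℕ)
    (hlam : ∀ j, 1 ≤ j → j < k → lam (j + 1) ≤ lam j) :
    ∀ a b, 1 ≤ a → a ≤ b → b ≤ k → lam b ≤ lam a := by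
  intro a b ha hab hbk
  induction b with
  | zero => omega
  | succ n ih =>
    rcases eq_or_lt_of_le hab with h | h
    · rw [h]
    · exact le_trans (hlam n (by omega) (by omega)) (ih (by omega) (by omega))

lemma mu_formula (k : ℕ) (lam mu : ℕ → ℕ)
    (hmu1 : mu 1 = lam 1)
    (hmu : ∀ j, 1 < j → j ≤ k → mu j = min (mu (j - 1)) (lam j + (j - 1))) :
    ∀ j (h1 : 1 ≤ j), j ≤ k →
      mu j = (Finset.Icc 1 j).inf' (Finset.nonempty_Icc.mpr h1) (fun t => lam t + t - 1) := by
  intro j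
  induction j with
  | zero => omega
  | succ n ih =>
    intro h1 hk
    rcases Nat.eq_zero_or_pos n with hn | hn
    · subst hn
      simp [hmu1]
    · have hIcc : Finset.Icc 1 (n + 1) = insert (n + 1) (Finset.Icc 1 n) :=
        (Finset.insert_Icc_right_eq_Icc_add_one (by omega)).symm
    -- rewrite inf' over insert
      have h2 : mu (n + 1) = min (mu n) (lam (n + 1) + n) := by
        have := hmu (n + 1) (by omega) hk
        simpa using this
      rw [h2, ih hn (by omega)]
      simp only [hIcc]
      rw [Finset.inf'_insert (Finset.nonempty_Icc.mpr hn)]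
      have h3 : lam (n + 1) + (n + 1) - 1 = lam (n + 1) + n := by omega
      rw [h3, min_comm]

/-- If `μ` is the maximal partition for `λ` and `i` lies in a block of equal parts of `λ`
whose smallest index is `m` (i.e. `λ m = λ i` and `λ j > λ i` for `j < m`), then
`μ i = λ i + sylv(λ^{(h)})`, where `λ^{(h)} = (λ 1 - λ i, ..., λ (m-1) - λ i)`. -/
theorem mu_eq_lam_add_sylv (k : ℕ) (lam mu : ℕ → ℕ) (i m : ℕ)
    (hlam : ∀ j, 1 ≤ j → j < k → lam (j + 1) ≤ lam j)
    (hmu1 : mu 1 = lam 1)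
    (hmu : ∀ j, 1 < j → j ≤ k → mu j = min (mu (j - 1)) (lam j + (j - 1)))
    (hi1 : 1 ≤ i) (hik : i ≤ k)
    (hm1 : 1 ≤ m) (hmi : m ≤ i) (hmv : lam m = lam i)
    (hmin : ∀ j, 1 ≤ j → j < m → lam i < lam j) :
    mu i = lam i + sylv (fun j => if 1 ≤ j ∧ j < m then lam j - lam i else 0) := by
  set f : ℕ → ℕ := fun j => if 1 ≤ j ∧ j < m then lam j - lam i else 0 with hf
  have hanti := lam_antitone k lam hlam
  have hconst : ∀ t, m ≤ t → t ≤ i → lam t = lam i := fun t h1 h2 =>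
    le_antisymm (hmv ▸ hanti m t hm1 h1 (le_trans h2 hik)) (hanti t i (by omega) h2 hik)
  have hne : (Finset.Icc 1 m).Nonempty := Finset.nonempty_Icc.mpr hm1
  set M := (Finset.Icc 1 m).inf' hne (fun t => lam t + t - 1) with hM
  have hMle : ∀ t, 1 ≤ t → t ≤ m → M ≤ lam t + t - 1 := fun t h1 h2 =>
    Finset.inf'_le _ (Finset.mem_Icc.mpr ⟨h1, h2⟩)
  have hMm : M ≤ lam i + m - 1 := by
    have h := hMle m hm1 le_rfl; rw [hmv] at h; exact h
  have hiM : lam i ≤ M := by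
    apply Finset.le_inf'
    intro t ht
    rw [Finset.mem_Icc] at ht
    rcases lt_or_ge t m with h | h
    · have := hmin t ht.1 h; omega
    · have ht' : t = m := le_antisymm ht.2 h
      subst ht'
      omega
  -- mu i = M
  have hne' : (Finset.Icc 1 i).Nonempty := Finset.nonempty_Icc.mpr hi1
  have hmui : mu i = M := by
    rw [mu_formula k lam mu hmu1 hmu i hi1 hik]
    apply le_antisymm
    · exact Finset.inf'_mono _ (Finset.Icc_subset_Icc_right hmi) hne
    · apply Finset.le_inf'
      intro t ht
      rw [Finset.mem_Icc] at ht
      rcases le_or_gt t m with h | h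
      · exact hMle t ht.1 h
      · have := hconst t (le_of_lt h) ht.2
        omega
  -- the set of fitting staircases is Iic (M - lam i)
  have hset : {s : ℕ | ∀ j, staircase s j ≤ f j} = Set.Iic (M - lam i) := by
    ext s
    simp only [Set.mem_setOf_eq, Set.mem_Iic]
    constructor
    · intro hs
      have hsm : s ≤ m - 1 := by
        by_contra h
        have h1 : staircase s m ≤ f m := hs m
        have h2 : f m = 0 := by simp [hf]
        have h3 : staircase s m = s + 1 - m := by
          simp only [staircase, if_pos (⟨hm1, by omega⟩ : 1 ≤ m ∧ m ≤ s)]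
        omega
      have hkey : lam i + s ≤ M := by
        apply Finset.le_inf'
        intro t ht
        rw [Finset.mem_Icc] at ht
        rcases eq_or_lt_of_le ht.2 with h | h
        · subst h; omega
        · rcases le_or_gt t s with h2 | h2
          · have h3 := hs t
            have h4 : staircase s t = s + 1 - t := by
              simp only [staircase, if_pos (⟨ht.1, h2⟩ : 1 ≤ t ∧ t ≤ s)]
            have h5 : f t = lam t - lam i := by
              simp only [hf, if_pos (⟨ht.1, h⟩ : 1 ≤ t ∧ t < m)]
            have h6 := hmin t ht.1 h
            omega
          · have := hmin t ht.1 h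
            omega
      omega
    · intro hs j
      by_cases hj : 1 ≤ j ∧ j ≤ s
      · have hjm : j < m := by omega
        have h4 : staircase s j = s + 1 - j := by
          simp only [staircase, if_pos hj]
        have h5 : f j = lam j - lam i := by
          simp only [hf, if_pos (⟨hj.1, hjm⟩ : 1 ≤ j ∧ j < m)]
        have h6 := hmin j hj.1 hjm
        have h7 := hMle j hj.1 (le_of_lt hjm)
        omega
      · have : staircase s j = 0 := by simp only [staircase, if_neg hj]
        simp [this]
  have hsylv : sylv f = M - lam i := by
    unfold sylv
    rw [hset, csSup_Iic]
  rw [hmui, hsylv]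
  omega
end

section
/- Let λ = (λ_1,...,λ_k) be a partition, P(λ) = (P_1,...,P_r) its blocks of equal parts, and μ the maximal partition for λ. Then |μ| = |λ| + Σ_{h=1}^{r-1} |P_{h+1}| · sylv(λ^{(h)}). -/
lemma sylv_eq_of (nu : ℕ → ℕ) (M : ℕ)
    (h1 : ∀ t, staircase M t ≤ nu t)
    (h2 : ∀ s, (∀ t, staircase s t ≤ nu t) → s ≤ M) :
    sylv nu = M := by
  apply le_antisymm
  · exact csSup_le ⟨M, h1⟩ h2
  · exact le_csSup ⟨M, fun s hs => h2 s hs⟩ h1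

/-- Summed form of the degree formula: if `μ` is the maximal partition for `λ` and
`m i` denotes the smallest index in the block of equal parts of `λ` containing `i`,
then `|μ| = |λ| + Σ_{h=1}^{r-1} |P_{h+1}| ⬝ sylv(λ^{(h)})`, the sum on the right being
rewritten as a sum over the indices `i ∈ [k]` of `sylv` of
`λ^{(h(i))} = (λ 1 - λ i, ..., λ (m i - 1) - λ i)` (indices in the first block
contribute `sylv ∅ = 0`). -/
theorem size_mu_eq_size_lam_add_sylv_sum (k : ℕ) (lam mu : ℕ → ℕ) (m : ℕ → ℕ)
    (hlam : ∀ j, 1 ≤ j → j < k → lam (j + 1) ≤ lam j)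
    (hmu1 : mu 1 = lam 1)
    (hmu : ∀ j, 1 < j → j ≤ k → mu j = min (mu (j - 1)) (lam j + (j - 1)))
    (hm : ∀ i, 1 ≤ i → i ≤ k →
      1 ≤ m i ∧ m i ≤ i ∧ lam (m i) = lam i ∧ ∀ j, 1 ≤ j → j < m i → lam i < lam j) :
    ∑ i ∈ Finset.Icc 1 k, mu i
      = (∑ i ∈ Finset.Icc 1 k, lam i)
        + ∑ i ∈ Finset.Icc 1 k,
            sylv (fun j => if 1 ≤ j ∧ j < m i then lam j - lam i else 0) := by
  have anti : ∀ a b, 1 ≤ a → a ≤ b → b ≤ k → lam b ≤ lam a := by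
    intro a b ha hab hbk
    induction b with
    | zero => omega
    | succ n ih =>
      rcases Nat.lt_or_ge a (n + 1) with h | h
      · have h1 := hlam n (by omega) (by omega)
        exact le_trans h1 (ih (by omega) (by omega))
      · have : a = n + 1 := by omega
        subst this; exact le_refl _
  have mu_ub : ∀ i, 1 ≤ i → i ≤ k → ∀ j, 1 ≤ j → j ≤ i → mu i ≤ lam j + (j - 1) := by
    intro i
    induction i with
    | zero => omega
    | succ n ih =>
      intro h1 hk j hj1 hji
      rcases Nat.eq_zero_or_pos n with hn | hn
      · subst hn
        have : j = 1 := by omega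
        subst this
        simp [hmu1]
      · have hrec := hmu (n + 1) (by omega) hk
        simp only [Nat.add_sub_cancel] at hrec
        rcases Nat.lt_or_ge j (n + 1) with hj | hj
        · have := ih (by omega) (by omega) j hj1 (by omega)
          omega
        · have : j = n + 1 := by omega
          subst this
          simp only [Nat.add_sub_cancel]
          omega
  have mu_lb : ∀ i, 1 ≤ i → i ≤ k → ∀ c, (∀ j, 1 ≤ j → j ≤ i → c ≤ lam j + (j - 1)) → c ≤ mu i := by
    intro i
    induction i with
    | zero => omega
    | succ n ih =>
      intro h1 hk c hc
      rcases Nat.eq_zero_or_pos n with hn | hn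
      · subst hn
        have := hc 1 le_rfl le_rfl
        have h0 : mu (0 + 1) = lam 1 := hmu1
        omega
      · have hrec := hmu (n + 1) (by omega) hk
        simp only [Nat.add_sub_cancel] at hrec
        have h1 := ih (by omega) (by omega) c (fun j hj1 hji => hc j hj1 (by omega))
        have h2 := hc (n + 1) (by omega) le_rfl
        simp only [Nat.add_sub_cancel] at h2
        omega
  have key : ∀ i ∈ Finset.Icc 1 k,
      mu i = lam i + sylv (fun j => if 1 ≤ j ∧ j < m i then lam j - lam i else 0) := by
    intro i hi
    rw [Finset.mem_Icc] at hi
    obtain ⟨hi1, hik⟩ := hi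
    obtain ⟨hm1, hmi, hmeq, hmlt⟩ := hm i hi1 hik
    have hlami : lam i ≤ mu i :=
      mu_lb i hi1 hik (lam i) (fun j hj1 hji => by
        have := anti j i hj1 hji hik; omega)
    have hub_mi : mu i ≤ lam i + (m i - 1) := by
      have := mu_ub i hi1 hik (m i) hm1 hmi
      omega
    rw [sylv_eq_of _ (mu i - lam i)]
    · omega
    · intro t
      by_cases htc : 1 ≤ t ∧ t ≤ mu i - lam i
      · obtain ⟨ht1, htM⟩ := htc
        have htmi : t < m i := by omega
        have hlt : lam i < lam t := hmlt t ht1 htmi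
        have hub := mu_ub i hi1 hik t ht1 (by omega)
        simp only [staircase, if_pos (And.intro ht1 htM), if_pos (And.intro ht1 htmi)]
        omega
      · simp only [staircase, if_neg htc]
        exact Nat.zero_le _
    · intro s hs
      have hsmi : s < m i := by
        by_contra h
        push_neg at h
        have h2 := hs (m i)
        simp only [staircase, if_pos (And.intro hm1 h), if_neg (by omega : ¬(1 ≤ m i ∧ m i < m i))] at h2
        omega
      have hkey : lam i + s ≤ mu i := by
        apply mu_lb i hi1 hik
        intro j hj1 hji
        rcases Nat.lt_or_ge s j with h | h
        · have := anti j i hj1 hji hik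
          omega
        · have hst := hs j
          simp only [staircase, if_pos (And.intro hj1 h)] at hst
          have hjmi : j < m i := by omega
          rw [if_pos ⟨hj1, hjmi⟩] at hst
          have := hmlt j hj1 hjmi
          omega
      omega
  rw [← Finset.sum_add_distrib]
  exact Finset.sum_congr rfl key
end

section
/- For the counterexample permutation w = 1 4 5 7 2 3 6 8 9 10 in S_10 (a Grassmannian permutation with descent at position 4, associated partition λ = (3,2,2,0)), the quantity Σ_{h∈[r-1]} |P_{h+1}| · sylv(λ^{(h)}) equals 5, while the Kummini–Lakshmibai–Sastry–Seshadri conjectural formula Σ_{i=r}^{k-1}(m_i - 1)·i with (m_1, m_2, m_3) = (2,1,3), r = 1, k = 4 equals 7; in particular the two formulas differ. -/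
/-- For the counterexample permutation `w = 1 4 5 7 2 3 6 8 9 10` with associated
partition `λ = (3,2,2,0)` (so `λ^{(1)} = (1)`, `λ^{(2)} = (3,2,2)`, `|P_2| = 2`,
`|P_3| = 1`), the formula `Σ_h |P_{h+1}| ⬝ sylv(λ^{(h)})` gives 5, while the
KLSS conjectural formula `Σ_{i=r}^{k-1} (m_i - 1) ⬝ i` with `(m_1,m_2,m_3) = (2,1,3)`,
`r = 1`, `k = 4` gives 7; the two formulas differ. -/
theorem klss_counterexample :
    2 * sylv (fun i => if i = 1 then 1 else 0)
        + 1 * sylv (fun i => if i = 1 then 3 else if i = 2 ∨ i = 3 then 2 else 0) = 5 ∧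
    (2 - 1) * 1 + (1 - 1) * 2 + (3 - 1) * 3 = 7 ∧
    (5 : ℕ) ≠ 7 := by
  have h1 : sylv (fun i => if i = 1 then 1 else 0) = 1 := by
    have : {m : ℕ | ∀ i, staircase m i ≤ (fun i => if i = 1 then 1 else 0) i} = Set.Iic 1 := by
      ext m
      simp only [Set.mem_setOf_eq, Set.mem_Iic, staircase]
      constructor
      · intro h
        by_contra hm
        have := h 2
        simp at this
        omega
      · intro hm i
        split
        · rename_i hi
          split <;> omega
        · simp
    rw [sylv, this, csSup_Iic]
  have h2 : sylv (fun i => if i = 1 then 3 else if i = 2 ∨ i = 3 then 2 else 0) = 3 := by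
    have : {m : ℕ | ∀ i, staircase m i ≤
        (fun i => if i = 1 then 3 else if i = 2 ∨ i = 3 then 2 else 0) i} = Set.Iic 3 := by
      ext m
      simp only [Set.mem_setOf_eq, Set.mem_Iic, staircase]
      constructor
      · intro h
        by_contra hm
        have := h 4
        simp at this
        omega
      · intro hm i
        split
        · rename_i hi
          split
          · omega
          · split <;> omega
        · simp
    rw [sylv, this, csSup_Iic]
  refine ⟨?_, by norm_num, by norm_num⟩
  rw [h1, h2]
end

section
/- Let λ = (λ_1,...,λ_k) be a partition with blocks P(λ) = (P_1,...,P_r) and let μ be the maximal partition for λ. Then μ_i ≤ λ_i + (i - 1) for all i, with equality for i = min P_{h+1} if and only if sylv(λ^{(h)}) = min P_{h+1} - 1. -/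
/-- For the maximal partition `μ` of `λ`: `μ i ≤ λ i + (i-1)` for all `i`, and when
`i = min P_{h+1}` is the smallest index of its block of equal parts, equality holds iff
`sylv(λ^{(h)}) = i - 1`, where `λ^{(h)} = (λ 1 - λ i, ..., λ (i-1) - λ i)`. -/
theorem mu_le_and_equality_iff (k : ℕ) (lam mu : ℕ → ℕ)
    (hlam : ∀ j, 1 ≤ j → j < k → lam (j + 1) ≤ lam j)
    (hmu1 : mu 1 = lam 1)
    (hmu : ∀ j, 1 < j → j ≤ k → mu j = min (mu (j - 1)) (lam j + (j - 1))) :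
    (∀ i, 1 ≤ i → i ≤ k → mu i ≤ lam i + (i - 1)) ∧
    (∀ i, 1 ≤ i → i ≤ k → (∀ j, 1 ≤ j → j < i → lam i < lam j) →
      (mu i = lam i + (i - 1) ↔
        sylv (fun j => if 1 ≤ j ∧ j < i then lam j - lam i else 0) = i - 1)) := by
  have hA : ∀ i, 1 ≤ i → i ≤ k → mu i ≤ lam i + (i - 1) := by
    intro i h1 hk
    rcases eq_or_lt_of_le h1 with h | h
    · simp [← h, hmu1]
    · rw [hmu i h hk]; exact min_le_right _ _
  refine ⟨hA, ?_⟩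
  have hmono : ∀ i j, 1 ≤ j → j ≤ i → i ≤ k → mu i ≤ mu j := by
    intro i
    induction i with
    | zero => intro j h1 h2 _; omega
    | succ n ih =>
      intro j h1 h2 hk
      rcases Nat.lt_or_ge j (n + 1) with h | h
      · have hstep : mu (n + 1) ≤ mu n := by
          have := hmu (n + 1) (by omega) hk
          simp only [Nat.add_sub_cancel] at this
          rw [this]; exact min_le_left _ _
        exact le_trans hstep (ih j h1 (by omega) (by omega))
      · have : j = n + 1 := by omega
        subst this; exact le_rfl
  have hC : ∀ i, 1 ≤ i → i ≤ k → ∀ c, (∀ j, 1 ≤ j → j ≤ i → c ≤ lam j + (j - 1)) →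
      c ≤ mu i := by
    intro i
    induction i with
    | zero => omega
    | succ n ih =>
      intro _ hk c hc
      rcases Nat.lt_or_ge 1 (n + 1) with h | h
      · have := hmu (n + 1) h hk
        simp only [Nat.add_sub_cancel] at this
        rw [this]
        refine le_min (ih (by omega) (by omega) c fun j hj1 hj2 => hc j hj1 (by omega)) ?_
        have := hc (n + 1) (by omega) le_rfl
        simpa using this
      · have hn : n = 0 := by omega
        subst hn
        rw [hmu1]
        simpa using hc 1 le_rfl le_rfl
  intro i h1 hk hstrict
  have keyB : mu i = lam i + (i - 1) ↔
      ∀ j, 1 ≤ j → j < i → lam i + (i - 1) ≤ lam j + (j - 1) := by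
    constructor
    · intro h j hj1 hji
      calc lam i + (i - 1) = mu i := h.symm
        _ ≤ mu j := hmono i j hj1 (le_of_lt hji) hk
        _ ≤ lam j + (j - 1) := hA j hj1 (by omega)
    · intro h
      refine le_antisymm (hA i h1 hk) (hC i h1 hk _ ?_)
      intro j hj1 hj2
      rcases eq_or_lt_of_le hj2 with he | he
      · subst he; exact le_rfl
      · exact h j hj1 he
  rw [keyB]
  set nu : ℕ → ℕ := fun j => if 1 ≤ j ∧ j < i then lam j - lam i else 0 with hnu
  have h0 : (0 : ℕ) ∈ {m : ℕ | ∀ j, staircase m j ≤ nu j} := by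
    intro j
    simp only [staircase]
    split
    · omega
    · exact Nat.zero_le _
  have hbdd : ∀ m ∈ {m : ℕ | ∀ j, staircase m j ≤ nu j}, m ≤ i - 1 := by
    intro m hm
    by_contra hc
    push_neg at hc
    have hi : i ≤ m := by omega
    have := hm i
    simp only [staircase, hnu] at this
    rw [if_pos ⟨h1, hi⟩, if_neg (by omega)] at this
    omega
  have hmem : (i - 1) ∈ {m : ℕ | ∀ j, staircase m j ≤ nu j} ↔
      ∀ j, 1 ≤ j → j < i → lam i + (i - 1) ≤ lam j + (j - 1) := by
    constructor
    · intro h j hj1 hji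
      have := h j
      simp only [staircase, hnu] at this
      rw [if_pos ⟨hj1, by omega⟩, if_pos ⟨hj1, hji⟩] at this
      have hs := hstrict j hj1 hji
      omega
    · intro h j
      simp only [staircase, hnu]
      split
      · rename_i hcond
        rw [if_pos ⟨hcond.1, by omega⟩]
        have hs := hstrict j hcond.1 (by omega)
        have := h j hcond.1 (by omega)
        omega
      · exact Nat.zero_le _
  rw [show (∀ j, 1 ≤ j → j < i → lam i + (i - 1) ≤ lam j + (j - 1)) ↔
      (i - 1) ∈ {m : ℕ | ∀ j, staircase m j ≤ nu j} from hmem.symm]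
  unfold sylv
  constructor
  · intro hm
    apply le_antisymm
    · exact csSup_le ⟨0, h0⟩ hbdd
    · exact le_csSup ⟨i - 1, hbdd⟩ hm
  · intro hs
    have := Nat.sSup_mem (⟨0, h0⟩ : Set.Nonempty _) ⟨i - 1, hbdd⟩
    rwa [hs] at this
end
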